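/- Let α ∈ Δ_M, i.e., α is a root of B_l that is not short: α = ±((α_i + ... + α_l) ± (α_j + ... + α_l)) with i < j. Then (α,α) = 1, (α,λ) ∈ {0, ±1/2} with 2(α,λ) ∈ {0,±1}, and for every r ∈ Q, (α,α) + 2(α, r+λ) ∈ ℤ. -/
import Mathlib


open Finset

/-- The short root `α_i + α_{i+1} + ... + α_l` of `B_l`, as a coefficient vector. -/
def sroot (l : ℕ) (i : Fin l) : Fin l → ℤ := fun k => if i ≤ k then 1 else 0

/-- The set `Δ_S` of short roots `±(α_i + ... + α_l)` of `B_l`. -/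
def ShortS (l : ℕ) : Set (Fin l → ℤ) := {x | ∃ i, x = sroot l i ∨ x = -sroot l i}

/-- The set `Δ_M` of middle-length roots of `B_l`:
`±((α_i+...+α_l) ± (α_j+...+α_l))` for `i < j`. -/
def MidS (l : ℕ) : Set (Fin l → ℤ) :=
  {x | ∃ i j : Fin l, i < j ∧ (x = sroot l i - sroot l j ∨ x = sroot l j - sroot l i ∨
      x = sroot l i + sroot l j ∨ x = -(sroot l i + sroot l j))}

/-- The set `Δ_L = {2γ : γ ∈ Δ_S}` of long roots of the folded system. -/
def LongS (l : ℕ) : Set (Fin l → ℤ) := {x | ∃ γ ∈ ShortS l, x = 2 • γ}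

/-- The root system `Δ̇` of `B_l`. -/
def RootsB (l : ℕ) : Set (Fin l → ℤ) := ShortS l ∪ MidS l

/-- Gram matrix entries of the normalized `B_l` form:
`(α_i,α_i) = 1` for `i < l`, `(α_l,α_l) = 1/2`, `(α_i,α_j) = -1/2` for `|i-j| = 1`,
and `0` for `|i-j| > 1`. -/
def gram (l : ℕ) (i j : Fin l) : ℚ :=
  if i = j then (if (i : ℕ) = l - 1 then 1/2 else 1)
  else if ((i : ℤ) - (j : ℤ)).natAbs = 1 then -1/2 else 0

/-- The normalized `B_l` bilinear form on coefficient vectors. -/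
def formQ (l : ℕ) (x y : Fin l → ℚ) : ℚ := ∑ i, ∑ j, x i * y j * gram l i j

/-- Coercion of an integer coefficient vector to a rational one. -/
def qc {l : ℕ} (x : Fin l → ℤ) : Fin l → ℚ := fun i => (x i : ℚ)

/-- The weight `λ = Σ_{i=1}^l (i/2) α_i` as a coefficient vector. -/
def lamQ (l : ℕ) : Fin l → ℚ := fun i => ((i : ℕ) + 1) / 2

/-- The 2-cocycle `ε` with `ε(α_i,α_j) = -1` iff `i = j+1`, extended bimultiplicatively. -/
def epsf (l : ℕ) (a b : Fin l → ℤ) : ℤˣ :=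
  ∏ i : Fin l, ∏ j : Fin l, (if (i : ℕ) = (j : ℕ) + 1 then (-1 : ℤˣ) else 1) ^ (a i * b j)

/-- Coefficient-wise reduction mod 2 keeping the sign:
`p₀(Σ k_i α_i) = Σ sgn(k_i)(k_i - 2⌊k_i/2⌋) α_i`. -/
def p0 {l : ℕ} (x : Fin l → ℤ) : Fin l → ℤ :=
  fun i => (if 0 ≤ x i then 1 else -1) * (x i % 2)

lemma gram_eq (l : ℕ) (k j : Fin l) :
    gram l k j = (if k = j then (if (j:ℕ) = l - 1 then (1:ℚ)/2 else 1) else 0)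
      + (if (k:ℕ) + 1 = (j:ℕ) then -(1/2) else 0)
      + (if (j:ℕ) + 1 = (k:ℕ) then -(1/2) else 0) := by
  unfold gram
  have hk := k.isLt; have hj := j.isLt
  simp only [Fin.ext_iff]
  split_ifs <;> try omega
  all_goals norm_num

lemma sum_support_single {l : ℕ} (g : Fin l → ℚ) (t : ℕ)
    (h : ∀ k : Fin l, (k:ℕ) ≠ t → g k = 0) :
    ∑ k, g k = if ht : t < l then g ⟨t, ht⟩ else 0 := by
  split_ifs with ht
  · exact Finset.sum_eq_single_of_mem ⟨t, ht⟩ (Finset.mem_univ _)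
      (fun k _ hk => h k (by simpa [Fin.ext_iff] using hk))
  · exact Finset.sum_eq_zero fun k _ => h k (by have := k.isLt; omega)

lemma qc_sroot (l : ℕ) (i k : Fin l) :
    qc (sroot l i) k = if (i:ℕ) ≤ (k:ℕ) then 1 else 0 := by
  unfold qc sroot
  rcases le_or_gt i k with h | h
  · rw [if_pos h, if_pos (Fin.le_def.mp h)]; norm_num
  · rw [if_neg (not_le.mpr h), if_neg (by have := Fin.lt_def.mp h; omega)]; norm_num

lemma innerSumB (l : ℕ) (i j : Fin l) :
    ∑ k, qc (sroot l i) k * gram l k j =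
      if j = i then 1/2 else if (j:ℕ) + 1 = (i:ℕ) then -(1/2) else 0 := by
  have hrw : ∀ k : Fin l, qc (sroot l i) k * gram l k j =
      (if (i:ℕ) ≤ (k:ℕ) then 1 else 0) * ((if k = j then (if (j:ℕ) = l - 1 then (1:ℚ)/2 else 1) else 0)
      + (if (k:ℕ) + 1 = (j:ℕ) then -(1/2) else 0)
      + (if (j:ℕ) + 1 = (k:ℕ) then -(1/2) else 0)) := by
    intro k; rw [qc_sroot, gram_eq]
  simp only [hrw, mul_add]
  rw [Finset.sum_add_distrib, Finset.sum_add_distrib]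
  have h1 : ∑ k : Fin l, (if (i:ℕ) ≤ (k:ℕ) then (1:ℚ) else 0) *
      (if k = j then (if (j:ℕ) = l - 1 then (1:ℚ)/2 else 1) else 0)
      = (if (i:ℕ) ≤ (j:ℕ) then 1 else 0) * (if (j:ℕ) = l - 1 then (1:ℚ)/2 else 1) := by
    rw [sum_support_single _ (j:ℕ) (fun k hk => by
      have : k ≠ j := by simp [Fin.ext_iff]; omega
      simp [this])]
    have hj := j.isLt
    rw [dif_pos hj]
    simp [Fin.ext_iff]
  have h2 : ∑ k : Fin l, (if (i:ℕ) ≤ (k:ℕ) then (1:ℚ) else 0) *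
      (if (k:ℕ) + 1 = (j:ℕ) then -(1/2) else 0)
      = if 1 ≤ (j:ℕ) ∧ (i:ℕ) ≤ (j:ℕ) - 1 then -(1/2) else 0 := by
    rcases Nat.eq_zero_or_pos (j:ℕ) with hj0 | hj0
    · rw [Finset.sum_eq_zero (fun k _ => by
        have : ¬ ((k:ℕ) + 1 = (j:ℕ)) := by omega
        simp [this])]
      simp [hj0]
    · rw [sum_support_single _ ((j:ℕ) - 1) (fun k hk => by
        have : ¬ ((k:ℕ) + 1 = (j:ℕ)) := by omega
        simp [this]), dif_pos (by have := j.isLt; omega : (j:ℕ) - 1 < l)]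
      have : ((⟨(j:ℕ)-1, by have := j.isLt; omega⟩ : Fin l) : ℕ) + 1 = (j:ℕ) := by simp; omega
      simp only [this, if_pos rfl]
      simp [hj0]
      split_ifs <;> first | rfl | omega
  have h3 : ∑ k : Fin l, (if (i:ℕ) ≤ (k:ℕ) then (1:ℚ) else 0) *
      (if (j:ℕ) + 1 = (k:ℕ) then -(1/2) else 0)
      = if (j:ℕ) + 1 < l ∧ (i:ℕ) ≤ (j:ℕ) + 1 then -(1/2) else 0 := by
    rw [sum_support_single _ ((j:ℕ) + 1) (fun k hk => by
      have : ¬ ((j:ℕ) + 1 = (k:ℕ)) := by omega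
      simp [this])]
    by_cases h : (j:ℕ) + 1 < l
    · rw [dif_pos h]
      by_cases h' : (i:ℕ) ≤ (j:ℕ) + 1
      · simp [h, h']
      · simp [h, h']
    · rw [dif_neg h, if_neg (by omega)]
  rw [h1, h2, h3]
  have hj := j.isLt; have hi := i.isLt
  split_ifs <;> try omega
  all_goals norm_num
  all_goals omega

lemma formQ_sroot (l : ℕ) (i : Fin l) (y : Fin l → ℚ) :
    formQ l (qc (sroot l i)) y =
      (y i - if hi : 0 < (i:ℕ) then y ⟨(i:ℕ)-1, by have := i.isLt; omega⟩ else 0) / 2 := by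
  unfold formQ
  have step : ∀ k : Fin l, ∑ j, qc (sroot l i) k * y j * gram l k j
      = ∑ j, (qc (sroot l i) k * gram l k j) * y j :=
    fun k => Finset.sum_congr rfl fun j _ => by ring
  simp only [step]
  rw [Finset.sum_comm]
  have step2 : ∀ j : Fin l, ∑ k, (qc (sroot l i) k * gram l k j) * y j
      = (if j = i then 1/2 else if (j:ℕ) + 1 = (i:ℕ) then -(1/2) else 0) * y j := by
    intro j
    rw [← Finset.sum_mul, innerSumB]
  simp only [step2]
  have split : ∀ j : Fin l,
      (if j = i then (1:ℚ)/2 else if (j:ℕ) + 1 = (i:ℕ) then -(1/2) else 0) * y j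
      = (if j = i then (1:ℚ)/2 else 0) * y j + (if (j:ℕ) + 1 = (i:ℕ) then -(1/2) else 0) * y j := by
    intro j
    by_cases h : j = i
    · subst h
      have : ¬ ((j:ℕ) + 1 = (j:ℕ)) := by omega
      simp [this]
    · simp [h]
  simp only [split]
  rw [Finset.sum_add_distrib]
  have hA : ∑ j : Fin l, (if j = i then (1:ℚ)/2 else 0) * y j = y i / 2 := by
    rw [Finset.sum_eq_single_of_mem i (Finset.mem_univ _)
      (fun j _ hj => by simp [hj])]
    simp [mul_comm]
    ring
  have hB : ∑ j : Fin l, (if (j:ℕ) + 1 = (i:ℕ) then -(1/2) else 0) * y j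
      = -(if hi : 0 < (i:ℕ) then y ⟨(i:ℕ)-1, by have := i.isLt; omega⟩ else 0) / 2 := by
    rcases Nat.eq_zero_or_pos (i:ℕ) with hi0 | hi0
    · rw [Finset.sum_eq_zero (fun j _ => by
        have : ¬ ((j:ℕ) + 1 = (i:ℕ)) := by omega
        simp [this])]
      rw [dif_neg (by omega)]
      norm_num
    · rw [Finset.sum_eq_single_of_mem ⟨(i:ℕ)-1, by have := i.isLt; omega⟩ (Finset.mem_univ _)
        (fun j _ hj => by
          have : ¬ ((j:ℕ) + 1 = (i:ℕ)) := by
            simp [Fin.ext_iff] at hj; omega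
          simp [this]),
        dif_pos hi0]
      have : ((⟨(i:ℕ)-1, by have := i.isLt; omega⟩ : Fin l) : ℕ) + 1 = (i:ℕ) := by simp; omega
      rw [if_pos this]
      ring
  rw [hA, hB]
  ring

lemma formQ_sroot_sroot (l : ℕ) (i j : Fin l) :
    formQ l (qc (sroot l i)) (qc (sroot l j)) = if i = j then 1/2 else 0 := by
  rw [formQ_sroot]
  rw [qc_sroot]
  by_cases hi : 0 < (i:ℕ)
  · rw [dif_pos hi, qc_sroot]
    simp only [Fin.ext_iff]
    split_ifs <;> first | omega | norm_num
  · rw [dif_neg hi]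
    simp only [Fin.ext_iff]
    split_ifs <;> first | omega | norm_num

lemma formQ_sroot_lam (l : ℕ) (i : Fin l) :
    formQ l (qc (sroot l i)) (lamQ l) = 1/4 := by
  rw [formQ_sroot]
  unfold lamQ
  by_cases hi : 0 < (i:ℕ)
  · rw [dif_pos hi]
    simp only []
    have : (((⟨(i:ℕ)-1, by have := i.isLt; omega⟩ : Fin l) : ℕ) : ℚ) = ((i:ℕ) : ℚ) - 1 := by
      simp
      rw [Nat.cast_sub (by omega : 1 ≤ (i:ℕ))]
      push_cast
      ring
    rw [this]
    ring
  · rw [dif_neg hi]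
    have : ((i:ℕ) : ℚ) = 0 := by simp; omega
    rw [this]
    ring

lemma formQ_sroot_int (l : ℕ) (i : Fin l) (r : Fin l → ℤ) :
    ∃ m : ℤ, 2 * formQ l (qc (sroot l i)) (qc r) = m := by
  rw [formQ_sroot]
  by_cases hi : 0 < (i:ℕ)
  · rw [dif_pos hi]
    exact ⟨r i - r ⟨(i:ℕ)-1, by have := i.isLt; omega⟩, by unfold qc; push_cast; ring⟩
  · rw [dif_neg hi]
    exact ⟨r i, by unfold qc; push_cast; ring⟩

lemma formQ_add_left (l : ℕ) (x x' y : Fin l → ℚ) :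
    formQ l (x + x') y = formQ l x y + formQ l x' y := by
  unfold formQ
  rw [← Finset.sum_add_distrib]
  refine Finset.sum_congr rfl fun i _ => ?_
  rw [← Finset.sum_add_distrib]
  exact Finset.sum_congr rfl fun j _ => by simp [add_mul]

lemma formQ_smul_left (l : ℕ) (c : ℚ) (x y : Fin l → ℚ) :
    formQ l (c • x) y = c * formQ l x y := by
  unfold formQ
  rw [Finset.mul_sum]
  refine Finset.sum_congr rfl fun i _ => ?_
  rw [Finset.mul_sum]
  exact Finset.sum_congr rfl fun j _ => by simp [Pi.smul_apply]; ring

lemma formQ_add_right (l : ℕ) (x y y' : Fin l → ℚ) :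
    formQ l x (y + y') = formQ l x y + formQ l x y' := by
  unfold formQ
  rw [← Finset.sum_add_distrib]
  refine Finset.sum_congr rfl fun i _ => ?_
  rw [← Finset.sum_add_distrib]
  exact Finset.sum_congr rfl fun j _ => by simp [mul_add, add_mul]

lemma formQ_smul_right (l : ℕ) (c : ℚ) (x y : Fin l → ℚ) :
    formQ l x (c • y) = c * formQ l x y := by
  unfold formQ
  rw [Finset.mul_sum]
  refine Finset.sum_congr rfl fun i _ => ?_
  rw [Finset.mul_sum]
  exact Finset.sum_congr rfl fun j _ => by simp [Pi.smul_apply]; ring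

lemma keyMid (l : ℕ) (i j : Fin l) (hij : i ≠ j) (e f : ℚ)
    (he : e = 1 ∨ e = -1) (hf : f = 1 ∨ f = -1) (u : Fin l → ℚ)
    (hu : u = e • qc (sroot l i) + f • qc (sroot l j)) :
    formQ l u u = 1 ∧
    (2 * formQ l u (lamQ l) = 0 ∨ 2 * formQ l u (lamQ l) = 1 ∨
      2 * formQ l u (lamQ l) = -1) ∧
    (∀ r : Fin l → ℤ, ∃ m : ℤ,
      formQ l u u + 2 * formQ l u (qc r + lamQ l) = m) := by
  have e2 : e * e = 1 := by rcases he with h | h <;> rw [h] <;> norm_num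
  have f2 : f * f = 1 := by rcases hf with h | h <;> rw [h] <;> norm_num
  have hleft : ∀ y : Fin l → ℚ, formQ l u y =
      e * formQ l (qc (sroot l i)) y + f * formQ l (qc (sroot l j)) y := by
    intro y
    rw [hu, formQ_add_left, formQ_smul_left, formQ_smul_left]
  have h1 := formQ_sroot_sroot l i i
  have h2 := formQ_sroot_sroot l i j
  have h3 := formQ_sroot_sroot l j i
  have h4 := formQ_sroot_sroot l j j
  rw [if_pos rfl] at h1 h4
  rw [if_neg hij] at h2
  rw [if_neg (Ne.symm hij)] at h3
  have huu : formQ l u u = 1 := by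
    rw [hleft u, hu, formQ_add_right, formQ_add_right,
      formQ_smul_right, formQ_smul_right, formQ_smul_right, formQ_smul_right,
      h1, h2, h3, h4]
    nlinarith [e2, f2]
  have hlam : 2 * formQ l u (lamQ l) = (e + f) / 2 := by
    rw [hleft, formQ_sroot_lam, formQ_sroot_lam]
    ring
  refine ⟨huu, ?_, ?_⟩
  · rw [hlam]
    rcases he with h | h <;> rcases hf with h' | h' <;> rw [h, h'] <;> norm_num
  · intro r
    obtain ⟨m1, hm1⟩ := formQ_sroot_int l i r
    obtain ⟨m2, hm2⟩ := formQ_sroot_int l j r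
    have hr : 2 * formQ l u (qc r + lamQ l)
        = e * (2 * formQ l (qc (sroot l i)) (qc r))
          + f * (2 * formQ l (qc (sroot l j)) (qc r)) + (e + f) / 2 := by
      rw [formQ_add_right, hleft (qc r), hleft (lamQ l),
        formQ_sroot_lam, formQ_sroot_lam]
      ring
    rw [huu, hr, hm1, hm2]
    rcases he with h | h <;> rcases hf with h' | h' <;> rw [h, h']
    · exact ⟨1 + m1 + m2 + 1, by push_cast; ring⟩
    · exact ⟨1 + m1 - m2, by push_cast; ring⟩
    · exact ⟨1 - m1 + m2, by push_cast; ring⟩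
    · exact ⟨1 - m1 - m2 - 1, by push_cast; ring⟩

/-- For `α ∈ Δ_M`: `(α,α) = 1`, `2(α,λ) ∈ {0, 1, -1}`, and
`(α,α) + 2(α, r+λ) ∈ ℤ` for all `r ∈ Q`. -/
theorem middle_root_pairing (l : ℕ) (a : Fin l → ℤ) (ha : a ∈ MidS l) :
    formQ l (qc a) (qc a) = 1 ∧
    (2 * formQ l (qc a) (lamQ l) = 0 ∨ 2 * formQ l (qc a) (lamQ l) = 1 ∨
      2 * formQ l (qc a) (lamQ l) = -1) ∧
    (∀ r : Fin l → ℤ, ∃ m : ℤ,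
      formQ l (qc a) (qc a) + 2 * formQ l (qc a) (qc r + lamQ l) = m) := by
  obtain ⟨i, j, hij, hcase⟩ := ha
  have hne : i ≠ j := ne_of_lt hij
  rcases hcase with h | h | h | h
  · exact keyMid l i j hne 1 (-1) (Or.inl rfl) (Or.inr rfl) (qc a)
      (by subst h; funext k; simp only [qc, Pi.add_apply, Pi.smul_apply, Pi.sub_apply, Pi.neg_apply, smul_eq_mul]; push_cast; ring)
  · exact keyMid l i j hne (-1) 1 (Or.inr rfl) (Or.inl rfl) (qc a)
      (by subst h; funext k; simp only [qc, Pi.add_apply, Pi.smul_apply, Pi.sub_apply, Pi.neg_apply, smul_eq_mul]; push_cast; ring)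
  · exact keyMid l i j hne 1 1 (Or.inl rfl) (Or.inl rfl) (qc a)
      (by subst h; funext k; simp only [qc, Pi.add_apply, Pi.smul_apply, Pi.sub_apply, Pi.neg_apply, smul_eq_mul]; push_cast; ring)
  · exact keyMid l i j hne (-1) (-1) (Or.inr rfl) (Or.inr rfl) (qc a)
      (by subst h; funext k; simp only [qc, Pi.add_apply, Pi.smul_apply, Pi.sub_apply, Pi.neg_apply, smul_eq_mul]; push_cast; ring)
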